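/- arXiv:1701.05613 — 4 statements merged into one kernel-verified Lean document; each statement's English description precedes it below -/
import Mathlib

section
/- For any real r > 0, r + √(r² + 1) ≤ (r/√d + √(r²/d + 1))^d for every integer d ≥ 1. -/
open Real

lemma mul_sinh_le (n : ℕ) (t : ℝ) (ht : 0 ≤ t) : (n : ℝ) * sinh t ≤ sinh (n * t) := by
  induction n with
  | zero => simp
  | succ n ih =>
    have h1 : 0 ≤ sinh t := by rwa [← Real.sinh_zero, Real.sinh_le_sinh]
    have h2 : 0 ≤ sinh ((n : ℝ) * t) := by
      rw [← Real.sinh_zero, Real.sinh_le_sinh]; positivity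
    have hc1 : (1 : ℝ) ≤ cosh t := Real.one_le_cosh t
    have hc2 : (1 : ℝ) ≤ cosh ((n : ℝ) * t) := Real.one_le_cosh _
    have : sinh ((↑n + 1) * t) = sinh ((n : ℝ) * t) * cosh t + cosh ((n : ℝ) * t) * sinh t := by
      rw [add_mul, one_mul, Real.sinh_add]
    push_cast
    rw [this]
    nlinarith

theorem stmt4 (r : ℝ) (hr : 0 < r) (d : ℕ) (hd : 1 ≤ d) :
    r + Real.sqrt (r ^ 2 + 1) ≤
      (r / Real.sqrt d + Real.sqrt (r ^ 2 / d + 1)) ^ d := by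
  have hd0 : (0:ℝ) < d := by exact_mod_cast hd
  have hsd : (0:ℝ) < Real.sqrt d := Real.sqrt_pos.mpr hd0
  have hsd1 : (1:ℝ) ≤ Real.sqrt d := by
    rw [show (1:ℝ) = Real.sqrt 1 by simp]
    exact Real.sqrt_le_sqrt (by exact_mod_cast hd)
  set s : ℝ := r / Real.sqrt d with hs
  have hs0 : 0 ≤ s := by positivity
  have hsq : s ^ 2 = r ^ 2 / d := by
    rw [hs, div_pow, Real.sq_sqrt hd0.le]
  -- key: arsinh r ≤ d * arsinh s
  have key : arsinh r ≤ d * arsinh s := by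
    rw [← Real.sinh_le_sinh, Real.sinh_arsinh]
    calc r ≤ Real.sqrt d * r := le_mul_of_one_le_left hr.le hsd1
      _ = (d : ℝ) * s := by have h := Real.mul_self_sqrt hd0.le; rw [hs]; field_simp; nlinarith [h]
      _ = (d : ℝ) * sinh (arsinh s) := by rw [Real.sinh_arsinh]
      _ ≤ sinh ((d : ℝ) * arsinh s) := mul_sinh_le d _ (by rwa [← Real.arsinh_zero, Real.arsinh_le_arsinh])
  calc r + Real.sqrt (r ^ 2 + 1) = exp (arsinh r) := by rw [Real.exp_arsinh, add_comm (r^2)]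
    _ ≤ exp ((d : ℝ) * arsinh s) := Real.exp_le_exp.mpr key
    _ = exp (arsinh s) ^ d := by rw [← Real.exp_nat_mul]
    _ = (s + Real.sqrt (s ^ 2 + 1)) ^ d := by rw [Real.exp_arsinh, add_comm (1:ℝ)]
    _ = _ := by rw [hsq]
end

section
/- Let r > 0, d ≥ 1, and set r' = r/√d and ρ* = r' + √((r')²+1). If z₁,...,z_d ∈ ℂ satisfy Σ_j z_j² = −r², then max_j |z_j + √(z_j²−1)| ≥ ρ*, with equality attained when each z_j = ± i r/√d. -/
/-- The larger of the two values of `|ζ + √(ζ²-1)|` (always `≥ 1`). -/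
noncomputable def jouk (ζ : ℂ) : ℝ :=
  max ‖ζ + (ζ ^ 2 - 1) ^ ((1 : ℂ) / 2)‖
    ‖ζ - (ζ ^ 2 - 1) ^ ((1 : ℂ) / 2)‖

lemma cpow_half_sq (z : ℂ) : (z ^ ((1:ℂ)/2)) ^ 2 = z := by
  rcases eq_or_ne z 0 with h | h
  · simp [h, Complex.zero_cpow (by norm_num : (1:ℂ)/2 ≠ 0)]
  · rw [sq, ← Complex.cpow_add _ _ h]; norm_num

lemma key (s : ℝ) (hs : 0 ≤ s) (ζ : ℂ) (h : (ζ^2).re ≤ -s^2) :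
    s + Real.sqrt (s^2+1) ≤ jouk ζ := by
  set w := (ζ^2 - 1) ^ ((1:ℂ)/2) with hwdef
  have hw2 : w^2 = ζ^2 - 1 := cpow_half_sq _
  have huv : (ζ + w) * (ζ - w) = 1 := by linear_combination -hw2
  have hab : ‖ζ + w‖ * ‖ζ - w‖ = 1 := by
    rw [← norm_mul, huv, norm_one]
  set a := ‖ζ + w‖ with hadef
  set b := ‖ζ - w‖ with hbdef
  have ha0 : 0 < a := norm_pos_iff.mpr (left_ne_zero_of_mul_eq_one huv)
  have hb0 : 0 < b := norm_pos_iff.mpr (right_ne_zero_of_mul_eq_one huv)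
  have hsum : ((ζ+w)^2).re + ((ζ-w)^2).re = 4 * (ζ^2).re - 2 := by
    have h1 : (ζ+w)^2 + (ζ-w)^2 = 4*ζ^2 - 2 := by linear_combination 2*hw2
    have := congrArg Complex.re h1
    simpa using this
  have hreu : -(a^2) ≤ ((ζ+w)^2).re := by
    have h1 : |((ζ+w)^2).re| ≤ ‖(ζ+w)^2‖ := Complex.abs_re_le_norm _
    rw [norm_pow] at h1
    have := neg_abs_le ((ζ+w)^2).re
    linarith [abs_nonneg ((ζ+w)^2).re]
  have hrev : -(b^2) ≤ ((ζ-w)^2).re := by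
    have h1 : |((ζ-w)^2).re| ≤ ‖(ζ-w)^2‖ := Complex.abs_re_le_norm _
    rw [norm_pow] at h1
    have := neg_abs_le ((ζ-w)^2).re
    linarith [abs_nonneg ((ζ-w)^2).re]
  have hbig : 4*s^2 + 2 ≤ a^2 + b^2 := by nlinarith
  set t := Real.sqrt (s^2+1) with htdef
  have ht2 : t^2 = s^2+1 := Real.sq_sqrt (by positivity)
  have ht0 : 0 ≤ t := Real.sqrt_nonneg _
  have hts : s ≤ t := by nlinarith
  rcases le_total a b with hle | hle
  · rw [show jouk ζ = max a b from rfl, max_eq_right hle]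
    have h2s : 2*s ≤ b - a := by nlinarith
    have hb2 : 2*s*b + 1 ≤ b^2 := by nlinarith
    nlinarith
  · rw [show jouk ζ = max a b from rfl, max_eq_left hle]
    have h2s : 2*s ≤ a - b := by nlinarith
    have hb2 : 2*s*a + 1 ≤ a^2 := by nlinarith
    nlinarith

lemma jouk_of_I (x : ℝ) : jouk ((x:ℂ) * Complex.I) = |x| + Real.sqrt (x^2+1) := by
  set ζ : ℂ := (x:ℂ) * Complex.I with hζ
  set w := (ζ^2 - 1) ^ ((1:ℂ)/2) with hwdef
  have hj : jouk ζ = max ‖ζ + w‖ ‖ζ - w‖ := rfl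
  have hw2 : w^2 = ζ^2 - 1 := cpow_half_sq _
  have hz2 : ζ^2 = -((x^2+1 : ℝ):ℂ) + 1 := by
    rw [hζ, mul_pow, Complex.I_sq]; push_cast; ring
  set t := Real.sqrt (x^2+1) with htdef
  have ht2 : t^2 = x^2+1 := Real.sq_sqrt (by positivity)
  have ht0 : 0 ≤ t := Real.sqrt_nonneg _
  have htx : |x| ≤ t := by nlinarith [abs_nonneg x, sq_abs x]
  have hc2 : ((t:ℂ) * Complex.I)^2 = -((x^2+1 : ℝ):ℂ) := by
    rw [mul_pow, Complex.I_sq]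
    push_cast [← ht2]; ring
  have habs : ∀ y : ℝ, ‖(y:ℂ) * Complex.I‖ = |y| := by
    intro y; rw [norm_mul, Complex.norm_I, Complex.norm_real, Real.norm_eq_abs, mul_one]
  have hfac : (w - (t:ℂ)*Complex.I) * (w + (t:ℂ)*Complex.I) = 0 := by
    linear_combination hw2 + hz2 - hc2
  have hmax : jouk ζ = max (|x + t|) (|x - t|) := by
    rcases mul_eq_zero.1 hfac with h | h
    · have hw : w = (t:ℂ)*Complex.I := sub_eq_zero.1 h
      have h1 : ζ + w = ((x + t : ℝ):ℂ) * Complex.I := by rw [hw, hζ]; push_cast; ring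
      have h2 : ζ - w = ((x - t : ℝ):ℂ) * Complex.I := by rw [hw, hζ]; push_cast; ring
      rw [hj, h1, h2, habs, habs]
    · have hw : w = -((t:ℂ)*Complex.I) := add_eq_zero_iff_eq_neg.1 h
      have h1 : ζ + w = ((x - t : ℝ):ℂ) * Complex.I := by rw [hw, hζ]; push_cast; ring
      have h2 : ζ - w = ((x + t : ℝ):ℂ) * Complex.I := by rw [hw, hζ]; push_cast; ring
      rw [hj, h1, h2, habs, habs, max_comm]
  rw [hmax, abs_of_nonneg (by linarith [neg_abs_le x]),
    abs_of_nonpos (by linarith [le_abs_self x] : x - t ≤ 0)]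
  rcases le_total 0 x with hx | hx
  · rw [max_eq_left (by linarith), abs_of_nonneg hx]
  · rw [max_eq_right (by linarith), abs_of_nonpos hx]; ring

theorem stmt11 (d : ℕ) (hd : 1 ≤ d) (r : ℝ) (hr : 0 < r) :
    (∀ z : Fin d → ℂ, ∑ j, (z j) ^ 2 = -(r ^ 2 : ℂ) →
      ∃ j, r / Real.sqrt d + Real.sqrt ((r / Real.sqrt d) ^ 2 + 1) ≤ jouk (z j)) ∧
    (∀ ε : Fin d → ℝ, (∀ j, ε j = 1 ∨ ε j = -1) →
      (∑ j, (((ε j * (r / Real.sqrt d) : ℝ) : ℂ) * Complex.I) ^ 2 = -(r ^ 2 : ℂ)) ∧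
      ∀ j, jouk (((ε j * (r / Real.sqrt d) : ℝ) : ℂ) * Complex.I) =
        r / Real.sqrt d + Real.sqrt ((r / Real.sqrt d) ^ 2 + 1)) := by
  have hd0 : (0:ℝ) < d := by exact_mod_cast Nat.lt_of_lt_of_le Nat.zero_lt_one hd
  set s := r / Real.sqrt d with hsdef
  have hsd : 0 < Real.sqrt d := Real.sqrt_pos.2 hd0
  have hs : 0 < s := div_pos hr hsd
  have hs2 : s^2 = r^2 / d := by
    rw [hsdef, div_pow, Real.sq_sqrt hd0.le]
  haveI : Nonempty (Fin d) := ⟨⟨0, hd⟩⟩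
  constructor
  · intro z hz
    have hre : ∑ j, ((z j)^2).re = -(r^2) := by
      have := congrArg Complex.re hz
      simpa [Complex.re_sum, ← Complex.ofReal_pow] using this
    have hj : ∃ j, ((z j)^2).re ≤ -(r^2)/d := by
      by_contra hcon
      push_neg at hcon
      have hlt : ∑ j : Fin d, -(r^2)/d < ∑ j, ((z j)^2).re :=
        Finset.sum_lt_sum_of_nonempty Finset.univ_nonempty (fun j _ => hcon j)
      rw [Finset.sum_const, Finset.card_univ, Fintype.card_fin, hre] at hlt
      have heq : (d : ℕ) • (-(r^2)/d : ℝ) = -(r^2) := by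
        rw [nsmul_eq_mul]
        field_simp
      rw [heq] at hlt
      exact lt_irrefl _ hlt
    obtain ⟨j, hj⟩ := hj
    refine ⟨j, key s hs.le _ ?_⟩
    rw [hs2]
    calc ((z j)^2).re ≤ -(r^2)/d := hj
      _ = -(r^2/d) := by ring
  · intro ε hε
    have he2 : ∀ j, (ε j)^2 = 1 := by
      intro j; rcases hε j with h | h <;> simp [h]
    constructor
    · have hterm : ∀ j, (((ε j * s : ℝ) : ℂ) * Complex.I)^2 = -((s^2 : ℝ) : ℂ) := by
        intro j
        rw [mul_pow, Complex.I_sq, mul_neg_one]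
        norm_cast
        rw [mul_pow, he2 j, one_mul]
      rw [Finset.sum_congr rfl (fun j _ => hterm j), Finset.sum_const,
        Finset.card_univ, Fintype.card_fin]
      have hds : (d : ℝ) * s^2 = r^2 := by
        rw [hs2]; field_simp
      rw [nsmul_eq_mul]
      have hreal : (d:ℝ) * -(s^2) = -(r^2) := by linarith [hds]
      exact_mod_cast hreal
    · intro j
      rw [jouk_of_I]
      have h1 : |ε j * s| = s := by
        rcases hε j with h | h <;> rw [h] <;> simp [abs_of_pos hs]
      have h2 : (ε j * s)^2 = s^2 := by rw [mul_pow, he2 j, one_mul]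
      rw [h1, h2]
end

section
/- Let r > 0. If z₁,...,z_d ∈ ℂ satisfy Σ_j z_j² = −r², then Π_{j=1}^d |z_j + √(z_j²−1)| ≥ r + √(r²+1), with equality attained when z₁ = ir and z₂ = ... = z_d = 0. -/
private lemma sq_half (w : ℂ) : (w ^ ((1:ℂ)/2))^2 = w := by
  rw [one_div]
  exact Complex.cpow_ofNat_inv_pow w 2

private lemma jouk_eq_max (ζ c : ℂ) (h : c^2 = ζ^2 - 1) :
    jouk ζ = max ‖ζ + c‖ ‖ζ - c‖ := by
  set u := (ζ^2 - 1) ^ ((1:ℂ)/2) with hu_def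
  have hu : u^2 = ζ^2 - 1 := sq_half _
  have h0 : (u - c) * (u + c) = 0 := by linear_combination hu - h
  rcases mul_eq_zero.1 h0 with h' | h'
  · have : u = c := by linear_combination h'
    rw [jouk, ← hu_def, this]
  · have : u = -c := by linear_combination h'
    rw [jouk, ← hu_def, this]
    rw [show ζ + -c = ζ - c by ring, show ζ - -c = ζ + c by ring, max_comm]

private lemma jouk_key (ζ : ℂ) : ∃ s : ℝ, 0 ≤ s ∧
    jouk ζ = s + Real.sqrt (s^2 + 1) ∧ -(s^2) ≤ (ζ^2).re := by
  set u := (ζ^2 - 1) ^ ((1:ℂ)/2) with hu_def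
  have hu : u^2 = ζ^2 - 1 := sq_half _
  set a := ζ + u with ha_def
  set b := ζ - u with hb_def
  have hab : a * b = 1 := by
    simp only [ha_def, hb_def]; linear_combination -hu
  set A := ‖a‖ with hA_def
  set B := ‖b‖ with hB_def
  have hAB : A * B = 1 := by
    rw [hA_def, hB_def, ← norm_mul, hab, norm_one]
  have hA0 : 0 ≤ A := norm_nonneg a
  have hB0 : 0 ≤ B := norm_nonneg b
  set ρ := max A B with hρ_def
  have hρA : A ≤ ρ := le_max_left _ _
  have hρB : B ≤ ρ := le_max_right _ _
  have hρ1 : 1 ≤ ρ := by nlinarith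
  have hρpos : 0 < ρ := by linarith
  have h2 : A^2 + B^2 = ρ^2 + ρ⁻¹^2 := by
    rcases le_total A B with hle | hle
    · have hB : ρ = B := max_eq_right hle
      have hBpos : 0 < B := by nlinarith
      have : ρ⁻¹ = A := by
        rw [hB]; field_simp; linarith [hAB]
      rw [this, hB]; ring
    · have hA : ρ = A := max_eq_left hle
      have hApos : 0 < A := by nlinarith
      have : ρ⁻¹ = B := by
        rw [hA]; field_simp; linarith [hAB]
      rw [this, hA]
  set s := (ρ - ρ⁻¹) / 2 with hs_def
  have hinv : ρ * ρ⁻¹ = 1 := mul_inv_cancel₀ (ne_of_gt hρpos)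
  have hρinv_le : ρ⁻¹ ≤ 1 := by
    rw [inv_le_one_iff₀]; right; exact hρ1
  have hs0 : 0 ≤ s := by rw [hs_def]; linarith
  have hsqrt : Real.sqrt (s^2 + 1) = (ρ + ρ⁻¹) / 2 := by
    have : s^2 + 1 = ((ρ + ρ⁻¹)/2)^2 := by
      rw [hs_def]; nlinarith [hinv]
    rw [this, Real.sqrt_sq (by positivity)]
  refine ⟨s, hs0, ?_, ?_⟩
  · rw [hsqrt, jouk, ← hu_def, ← ha_def, ← hb_def, ← hA_def, ← hB_def, ← hρ_def, hs_def]
    ring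
  · have hζ : ζ^2 * 4 = a^2 + b^2 + 2 := by
      simp only [ha_def, hb_def]; linear_combination -2 * hu
    have hre := congrArg Complex.re hζ
    simp only [Complex.mul_re, Complex.add_re, Complex.re_ofNat, Complex.im_ofNat,
      Complex.ofReal_re, mul_zero, sub_zero] at hre
    have hra : -(A^2) ≤ (a^2).re := by
      have h1 := neg_abs_le (a^2).re
      have h2' := Complex.abs_re_le_norm (a^2)
      have : ‖a^2‖ = A^2 := by rw [norm_pow]
      nlinarith [abs_nonneg (a^2).re]
    have hrb : -(B^2) ≤ (b^2).re := by
      have h1 := neg_abs_le (b^2).re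
      have h2' := Complex.abs_re_le_norm (b^2)
      have : ‖b^2‖ = B^2 := by rw [norm_pow]
      nlinarith [abs_nonneg (b^2).re]
    have : (ζ^2).re * 4 = (a^2).re + (b^2).re + 2 := by linarith [hre]
    rw [hs_def]
    nlinarith [h2, hinv]

private lemma g_super (s t : ℝ) (hs : 0 ≤ s) (ht : 0 ≤ t) :
    (s + t) + Real.sqrt ((s+t)^2 + 1) ≤
      (s + Real.sqrt (s^2+1)) * (t + Real.sqrt (t^2+1)) := by
  set P := Real.sqrt (s^2+1) with hP
  set Q := Real.sqrt (t^2+1) with hQ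
  have hP2 : P^2 = s^2+1 := Real.sq_sqrt (by positivity)
  have hQ2 : Q^2 = t^2+1 := Real.sq_sqrt (by positivity)
  have hPnn : 0 ≤ P := Real.sqrt_nonneg _
  have hQnn : 0 ≤ Q := Real.sqrt_nonneg _
  have hP1 : 1 ≤ P := by nlinarith [sq_nonneg s]
  have hQ1 : 1 ≤ Q := by nlinarith [sq_nonneg t]
  have hPQ : 1 ≤ P * Q := one_le_mul_of_one_le_of_one_le hP1 hQ1
  have hPQ2 : (P*Q)^2 = (s^2+1)*(t^2+1) := by rw [mul_pow, hP2, hQ2]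
  have hst : 0 ≤ s * t := mul_nonneg hs ht
  have hkey : Real.sqrt ((s+t)^2+1) ≤ s*t + P*Q := by
    have h0 : 0 ≤ s*t + P*Q - 1 := by linarith
    have h1 : (s+t)^2 + 1 ≤ (s*t + P*Q)^2 := by
      nlinarith [mul_nonneg hst h0, hPQ2, sq_nonneg (s*t)]
    calc Real.sqrt ((s+t)^2+1) ≤ Real.sqrt ((s*t + P*Q)^2) := Real.sqrt_le_sqrt h1
      _ = s*t + P*Q := Real.sqrt_sq (by nlinarith)
  nlinarith [hkey]

private lemma prod_g {ι : Type*} (S : Finset ι) (f : ι → ℝ) (hf : ∀ i ∈ S, 0 ≤ f i) :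
    (∑ i ∈ S, f i) + Real.sqrt ((∑ i ∈ S, f i)^2 + 1) ≤
      ∏ i ∈ S, (f i + Real.sqrt ((f i)^2 + 1)) := by
  induction S using Finset.cons_induction with
  | empty => simp
  | cons a S haS ih =>
    have hfa : 0 ≤ f a := hf a (Finset.mem_cons_self _ _)
    have hfS : ∀ i ∈ S, 0 ≤ f i := fun i hi => hf i (Finset.mem_cons_of_mem hi)
    have hsum0 : 0 ≤ ∑ i ∈ S, f i := Finset.sum_nonneg hfS
    rw [Finset.sum_cons, Finset.prod_cons]
    calc (f a + ∑ i ∈ S, f i) + Real.sqrt ((f a + ∑ i ∈ S, f i)^2 + 1)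
        ≤ (f a + Real.sqrt ((f a)^2+1)) * ((∑ i ∈ S, f i) + Real.sqrt ((∑ i ∈ S, f i)^2+1)) :=
          g_super _ _ hfa hsum0
      _ ≤ (f a + Real.sqrt ((f a)^2+1)) * ∏ i ∈ S, (f i + Real.sqrt ((f i)^2+1)) := by
          apply mul_le_mul_of_nonneg_left (ih hfS)
          positivity

theorem stmt12 (d : ℕ) (hd : 1 ≤ d) (r : ℝ) (hr : 0 < r) :
    (∀ z : Fin d → ℂ, ∑ j, (z j) ^ 2 = -(r ^ 2 : ℂ) →
      r + Real.sqrt (r ^ 2 + 1) ≤ ∏ j, jouk (z j)) ∧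
    (∑ j : Fin d, ((fun j : Fin d => if (j : ℕ) = 0 then (r : ℂ) * Complex.I else 0) j) ^ 2
        = -(r ^ 2 : ℂ) ∧
      ∏ j : Fin d, jouk ((fun j : Fin d => if (j : ℕ) = 0 then (r : ℂ) * Complex.I else 0) j)
        = r + Real.sqrt (r ^ 2 + 1)) := by
  haveI : NeZero d := ⟨by omega⟩
  have hsq : (Real.sqrt (r^2+1))^2 = r^2 + 1 := Real.sq_sqrt (by positivity)
  have hsqr : r ≤ Real.sqrt (r^2+1) := by nlinarith [Real.sqrt_nonneg (r^2+1)]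
  constructor
  · intro z hz
    choose s hs0 hjk hre using fun j => jouk_key (z j)
    have hre_sum : ∑ j, ((z j)^2).re = -(r^2) := by
      rw [← Complex.re_sum, hz]
      simp [← Complex.ofReal_pow]
    have hsum_sq : r^2 ≤ ∑ j, (s j)^2 := by
      have h1 : ∑ j, -((s j)^2) ≤ ∑ j, ((z j)^2).re :=
        Finset.sum_le_sum fun j _ => hre j
      rw [hre_sum, Finset.sum_neg_distrib] at h1
      linarith
    have hsum0 : 0 ≤ ∑ j, s j := Finset.sum_nonneg fun j _ => hs0 j
    have hsq_sum : ∑ j, (s j)^2 ≤ (∑ j, s j)^2 := by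
      exact Finset.sum_sq_le_sq_sum_of_nonneg fun j _ => hs0 j
    have hrT : r ≤ ∑ j, s j := by nlinarith
    have hmono : r + Real.sqrt (r^2+1) ≤ (∑ j, s j) + Real.sqrt ((∑ j, s j)^2 + 1) := by
      have : Real.sqrt (r^2+1) ≤ Real.sqrt ((∑ j, s j)^2+1) :=
        Real.sqrt_le_sqrt (by nlinarith)
      linarith
    calc r + Real.sqrt (r^2+1) ≤ (∑ j, s j) + Real.sqrt ((∑ j, s j)^2 + 1) := hmono
      _ ≤ ∏ j, (s j + Real.sqrt ((s j)^2 + 1)) := prod_g _ _ fun j _ => hs0 j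
      _ = ∏ j, jouk (z j) := Finset.prod_congr rfl fun j _ => (hjk j).symm
  · have hz0 : ∀ j : Fin d, j ≠ 0 →
        ((fun j : Fin d => if (j : ℕ) = 0 then (r : ℂ) * Complex.I else 0) j) = 0 := by
      intro j hj
      have hj' : ¬ ((j : ℕ) = 0) := fun h => hj (Fin.ext (by simp [h]))
      simp only [if_neg hj']
    have hz00 : ((fun j : Fin d => if (j : ℕ) = 0 then (r : ℂ) * Complex.I else 0) 0)
        = (r : ℂ) * Complex.I := by simp
    constructor
    · rw [Finset.sum_eq_single_of_mem (0 : Fin d) (Finset.mem_univ _)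
        (fun j _ hj => by rw [hz0 j hj]; ring)]
      rw [hz00]
      have : Complex.I^2 = -1 := Complex.I_sq
      ring_nf
      rw [this]; ring
    · have hjouk0 : jouk 0 = 1 := by
        rw [jouk_eq_max 0 Complex.I (by rw [Complex.I_sq]; ring)]
        simp
      have hjoukri : jouk ((r:ℂ) * Complex.I) = r + Real.sqrt (r^2+1) := by
        have hc : ((Real.sqrt (r^2+1) : ℝ) * Complex.I : ℂ)^2
            = ((r:ℂ) * Complex.I)^2 - 1 := by
          rw [mul_pow, mul_pow, Complex.I_sq]
          rw [show ((Real.sqrt (r^2+1) : ℝ) : ℂ)^2 = ((Real.sqrt (r^2+1)^2 : ℝ) : ℂ) by push_cast; ring]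
          rw [hsq]
          push_cast
          ring
        rw [jouk_eq_max _ _ hc]
        have h1 : (r:ℂ) * Complex.I + (Real.sqrt (r^2+1) : ℝ) * Complex.I
            = ((r + Real.sqrt (r^2+1) : ℝ) : ℂ) * Complex.I := by push_cast; ring
        have h2 : (r:ℂ) * Complex.I - (Real.sqrt (r^2+1) : ℝ) * Complex.I
            = ((r - Real.sqrt (r^2+1) : ℝ) : ℂ) * Complex.I := by push_cast; ring
        rw [h1, h2]
        simp only [norm_mul, Complex.norm_I, mul_one, Complex.norm_real, Real.norm_eq_abs]
        rw [abs_of_nonneg (by linarith), abs_of_nonpos (by linarith)]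
        rw [max_eq_left (by linarith)]
      rw [Finset.prod_eq_single_of_mem (0 : Fin d) (Finset.mem_univ _)
        (fun j _ hj => by rw [hz0 j hj, hjouk0])]
      rw [hz00, hjoukri]
end

section
/- Let α > 1 and set a = (α + 1/α)/2, b = (α − 1/α)/2. If z₁ ∈ ℂ satisfies |z₁ + √(z₁²−1)| ≤ α and z₂ = ±i(z₁ − α), then |z₂ + √(z₂²−1)| ≥ α. Consequently, min over the singular set {z₂ = ±i(z₁−α)} of max(log|z₁+√(z₁²−1)|, log|z₂+√(z₂²−1)|) equals log α, attained at z₁ = a, z₂ = −ib. -/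
lemma sq_w (ζ : ℂ) : ((ζ ^ 2 - 1) ^ ((1 : ℂ) / 2)) ^ 2 = ζ ^ 2 - 1 := by
  have h : ((1 : ℂ) / 2) = ((2 : ℕ) : ℂ)⁻¹ := by norm_num
  rw [h]
  exact Complex.cpow_nat_inv_pow _ (by norm_num)

lemma jouk_props (ζ : ℂ) : 1 ≤ jouk ζ ∧ |ζ.re| ≤ (jouk ζ + (jouk ζ)⁻¹) / 2 ∧
    |ζ.im| ≤ (jouk ζ - (jouk ζ)⁻¹) / 2 := by
  set w := (ζ ^ 2 - 1) ^ ((1 : ℂ) / 2) with hwdef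
  have hw2 : w ^ 2 = ζ ^ 2 - 1 := sq_w ζ
  have huv : (ζ + w) * (ζ - w) = 1 := by linear_combination -hw2
  set p := ‖ζ + w‖ with hp'
  set q := ‖ζ - w‖ with hq'
  have hjouk : jouk ζ = max p q := rfl
  have hpq : p * q = 1 := by rw [hp', hq', ← norm_mul, huv, norm_one]
  have hp0 : 0 < p := norm_pos_iff.mpr (left_ne_zero_of_mul_eq_one huv)
  have hq0 : 0 < q := norm_pos_iff.mpr (right_ne_zero_of_mul_eq_one huv)
  have hmaxmin : min p q = (max p q)⁻¹ := by
    rcases le_total p q with h | h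
    · rw [min_eq_left h, max_eq_right h]
      exact eq_inv_of_mul_eq_one_left hpq
    · rw [min_eq_right h, max_eq_left h]
      exact eq_inv_of_mul_eq_one_right hpq
  have hone : 1 ≤ max p q := by
    nlinarith [le_max_left p q, le_max_right p q, hp0, hq0,
      mul_le_mul (le_max_left p q) (le_max_right p q) hq0.le
        (le_trans hp0.le (le_max_left p q))]
  refine ⟨hjouk ▸ hone, ?_, ?_⟩
  · -- real part bound
    have hre : ζ.re = ((ζ + w).re + (ζ - w).re) / 2 := by
      simp only [Complex.add_re, Complex.sub_re]; ring
    have h1 : |(ζ + w).re| ≤ p := Complex.abs_re_le_norm _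
    have h2 : |(ζ - w).re| ≤ q := Complex.abs_re_le_norm _
    have hsum : p + q = max p q + (max p q)⁻¹ := by
      rw [← hmaxmin]; rcases le_total p q with h | h
      · rw [max_eq_right h, min_eq_left h]; ring
      · rw [max_eq_left h, min_eq_right h]
    rw [hjouk, ← hsum, hre, abs_div]
    have h3 := abs_add_le ((ζ + w).re) ((ζ - w).re)
    have h4 : |(2:ℝ)| = 2 := by norm_num
    rw [h4]
    linarith
  · -- imaginary part bound
    have hne : ζ + w ≠ 0 := left_ne_zero_of_mul_eq_one huv
    have hinv : ζ - w = (ζ + w)⁻¹ := eq_inv_of_mul_eq_one_right huv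
    have him2 : (ζ - w).im = -(ζ + w).im / Complex.normSq (ζ + w) := by
      rw [hinv, Complex.inv_im]
    have hns : Complex.normSq (ζ + w) = p ^ 2 := by
      rw [Complex.normSq_eq_norm_sq]
    have him : ζ.im = (ζ + w).im * (1 - q ^ 2) / 2 := by
      have : ζ.im = ((ζ + w).im + (ζ - w).im) / 2 := by
        simp only [Complex.add_im, Complex.sub_im]; ring
      rw [this, him2, hns]
      have hq2 : (p:ℝ)⁻¹ = q := (eq_inv_of_mul_eq_one_right hpq).symm
      field_simp
      ring_nf
      rw [← hq2]
      field_simp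
      ring
    have h1 : |(ζ + w).im| ≤ p := Complex.abs_im_le_norm _
    have hdiff : |p - q| = max p q - (max p q)⁻¹ := by
      rw [← hmaxmin, ← max_sub_min_eq_abs, max_comm q p, min_comm q p]
    rw [hjouk, ← hdiff, him]
    have key : |(ζ + w).im * (1 - q ^ 2)| ≤ |p - q| := by
      rw [abs_mul]
      calc |(ζ + w).im| * |1 - q ^ 2| ≤ p * |1 - q ^ 2| := by
            exact mul_le_mul_of_nonneg_right h1 (abs_nonneg _)
        _ = |p * (1 - q ^ 2)| := by rw [abs_mul, abs_of_pos hp0]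
        _ = |p - q| := by
            congr 1
            linear_combination (-q) * hpq
    rw [abs_div]
    have h4 : |(2:ℝ)| = 2 := by norm_num
    rw [h4]
    linarith

lemma jouk_eq_of_sq (ζ c : ℂ) (h : ζ ^ 2 - 1 = c ^ 2) :
    jouk ζ = max ‖ζ + c‖ ‖ζ - c‖ := by
  have hw2 : ((ζ ^ 2 - 1) ^ ((1 : ℂ) / 2)) ^ 2 = c ^ 2 := by rw [sq_w, h]
  have hzero : (((ζ ^ 2 - 1) ^ ((1 : ℂ) / 2)) - c) * (((ζ ^ 2 - 1) ^ ((1 : ℂ) / 2)) + c) = 0 := by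
    linear_combination hw2
  unfold jouk
  rcases mul_eq_zero.mp hzero with h1 | h1
  · have hc : (ζ ^ 2 - 1) ^ ((1 : ℂ) / 2) = c := by linear_combination h1
    rw [hc]
  · have hc : (ζ ^ 2 - 1) ^ ((1 : ℂ) / 2) = -c := by linear_combination h1
    rw [hc]
    rw [sub_neg_eq_add, ← sub_eq_add_neg, max_comm]

theorem stmt14 (α : ℝ) (hα : 1 < α) (a b : ℝ) (ha : a = (α + 1 / α) / 2)
    (hb : b = (α - 1 / α) / 2) :
    (∀ z1 z2 : ℂ, (z2 = Complex.I * (z1 - (α : ℂ)) ∨ z2 = -(Complex.I * (z1 - (α : ℂ)))) →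
      ((jouk z1 ≤ α → α ≤ jouk z2) ∧
        Real.log α ≤ max (Real.log (jouk z1)) (Real.log (jouk z2)))) ∧
    max (Real.log (jouk (a : ℂ))) (Real.log (jouk (-(Complex.I * (b : ℂ))))) = Real.log α := by
  have hα0 : (0 : ℝ) < α := by linarith
  have hb0 : 0 < b := by rw [hb]; have : 1 / α < 1 := by rw [div_lt_one hα0]; linarith
                         linarith
  have hab : a + b = α := by rw [ha, hb]; ring
  have hamb : a - b = 1 / α := by rw [ha, hb]; ring
  have hbα : b = α - a := by rw [ha, hb]; ring
  have haα : a ≤ α := by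
    have h1 : 1 / α ≤ α := by rw [div_le_iff₀ hα0]; nlinarith
    rw [ha]; linarith
  have key1 : ∀ ζ : ℂ, jouk ζ ≤ α → |ζ.re| ≤ a := by
    intro ζ h
    obtain ⟨h1, h2, _⟩ := jouk_props ζ
    set s := jouk ζ with hs
    have hs0 : (0 : ℝ) < s := by linarith
    have hsinv : s * s⁻¹ = 1 := mul_inv_cancel₀ (ne_of_gt hs0)
    have hαinv : α * α⁻¹ = 1 := mul_inv_cancel₀ (ne_of_gt hα0)
    have hmain : s + s⁻¹ ≤ α + α⁻¹ := by
      nlinarith [mul_nonneg (sub_nonneg.2 h) (by nlinarith : (0:ℝ) ≤ s * α - 1),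
        mul_pos hs0 hα0]
    rw [ha, one_div]
    linarith
  have key2 : ∀ ζ : ℂ, b ≤ |ζ.im| → α ≤ jouk ζ := by
    intro ζ h
    obtain ⟨h1, _, h3⟩ := jouk_props ζ
    set s := jouk ζ with hs
    have hs0 : (0 : ℝ) < s := by linarith
    have hsinv : s * s⁻¹ = 1 := mul_inv_cancel₀ (ne_of_gt hs0)
    have hαinv : α * α⁻¹ = 1 := mul_inv_cancel₀ (ne_of_gt hα0)
    have hle : α - α⁻¹ ≤ s - s⁻¹ := by
      rw [hb, one_div] at *
      linarith [le_trans h h3]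
    nlinarith [mul_pos hs0 hα0, mul_le_mul_of_nonneg_left hle (le_of_lt (mul_pos hs0 hα0))]
  constructor
  · intro z1 z2 hz2
    have him : |z2.im| = |z1.re - α| := by
      rcases hz2 with h | h <;> rw [h] <;>
        simp [Complex.mul_im, Complex.sub_re, Complex.sub_im, Complex.neg_im,
          Complex.ofReal_re, Complex.ofReal_im, abs_neg] <;>
        rw [abs_sub_comm]
    have main : jouk z1 ≤ α → α ≤ jouk z2 := by
      intro h
      apply key2
      have hre := key1 z1 h
      have hz1a : z1.re ≤ a := le_of_abs_le hre
      rw [him, abs_of_nonpos (by linarith : z1.re - α ≤ 0)]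
      linarith
    refine ⟨main, ?_⟩
    by_cases h : jouk z1 ≤ α
    · exact le_max_of_le_right (Real.log_le_log hα0 (main h))
    · push_neg at h
      exact le_max_of_le_left (Real.log_le_log hα0 h.le)
  · have e1 : jouk (a : ℂ) = α := by
      have hab2 : a ^ 2 - b ^ 2 = 1 := by
        rw [ha, hb]; field_simp; ring
      have hsq : ((a : ℂ)) ^ 2 - 1 = ((b : ℂ)) ^ 2 := by
        have : ((a ^ 2 - b ^ 2 : ℝ) : ℂ) = 1 := by rw [hab2]; norm_num
        push_cast at this
        linear_combination this
      rw [jouk_eq_of_sq _ _ hsq]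
      have c1 : (a : ℂ) + b = ((a + b : ℝ) : ℂ) := by push_cast; ring
      have c2 : (a : ℂ) - b = ((a - b : ℝ) : ℂ) := by push_cast; ring
      rw [c1, c2, Complex.norm_real, Complex.norm_real, Real.norm_eq_abs, Real.norm_eq_abs,
        abs_of_pos (by linarith : (0:ℝ) < a + b),
        abs_of_pos (by rw [hamb]; positivity : (0:ℝ) < a - b)]
      rw [hab, hamb]
      rw [max_eq_left]
      have : 1 / α ≤ 1 := by rw [div_le_one hα0]; linarith
      linarith
    have e2 : jouk (-(Complex.I * (b : ℂ))) = α := by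
      have hab2 : a ^ 2 - b ^ 2 = 1 := by
        rw [ha, hb]; field_simp; ring
      have hsq : (-(Complex.I * (b : ℂ))) ^ 2 - 1 = (Complex.I * (a : ℂ)) ^ 2 := by
        have : ((a ^ 2 - b ^ 2 : ℝ) : ℂ) = 1 := by rw [hab2]; norm_num
        push_cast at this
        have hI : Complex.I ^ 2 = -1 := Complex.I_sq
        linear_combination ((b:ℂ)^2 - (a:ℂ)^2) * hI + this
      rw [jouk_eq_of_sq _ _ hsq]
      have c1 : -(Complex.I * (b : ℂ)) + Complex.I * (a : ℂ) = Complex.I * ((a - b : ℝ) : ℂ) := by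
        push_cast; ring
      have c2 : -(Complex.I * (b : ℂ)) - Complex.I * (a : ℂ) = -(Complex.I * ((a + b : ℝ) : ℂ)) := by
        push_cast; ring
      rw [c1, c2, norm_neg, norm_mul, norm_mul, Complex.norm_I, one_mul, one_mul,
        Complex.norm_real, Complex.norm_real, Real.norm_eq_abs, Real.norm_eq_abs,
        abs_of_pos (by rw [hamb]; positivity : (0:ℝ) < a - b),
        abs_of_pos (by linarith : (0:ℝ) < a + b), hab, hamb]
      rw [max_eq_right]
      have : 1 / α ≤ 1 := by rw [div_le_one hα0]; linarith
      linarith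
    rw [e1, e2, max_self]
end
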